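/- arXiv:1901.01252 — 6 statements merged into one kernel-verified Lean document; each statement's English description precedes it below -/
import Mathlib

section
/- For a finite poset L and every natural number n, there are only finitely many equivalence classes of L-evaluations (monotone maps from finite rooted posets into L) with respect to the relation ∼ₙ, defined by: u ∼₀ v iff u(ρ(dom u)) = v(ρ(dom v)) (the roots have the same value), and u ∼ₙ₊₁ v iff for every p in dom u there exists q in dom v with u_p ∼ₙ v_q, and vice versa. -/
/-- A finite rooted poset: a finite partial order with a greatest element (the root). -/
structure FRP : Type 1 where
  carrier : Type
  [po : PartialOrder carrier]
  [fin : Finite carrier]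
  root : carrier
  le_root : ∀ x : carrier, x ≤ root

attribute [instance] FRP.po FRP.fin

/-- The downset of a point, as a finite rooted poset. -/
def FRP.down (P : FRP) (p : P.carrier) : FRP where
  carrier := {x : P.carrier // x ≤ p}
  root := ⟨p, le_refl p⟩
  le_root := fun x => x.2

/-- An `L`-evaluation: a monotone map from a finite rooted poset into `L`. -/
structure Eval (L : Type) [PartialOrder L] : Type 1 where
  P : FRP
  map : P.carrier → L
  mono : Monotone map

variable {L : Type} [PartialOrder L]

/-- Restriction of an evaluation to the downset of a point. -/
def Eval.restrict (u : Eval L) (p : u.P.carrier) : Eval L where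
  P := u.P.down p
  map := fun x => u.map x.1
  mono := fun _ _ h => u.mono h

/-- The value of an evaluation at the root of its domain. -/
def Eval.rootVal (u : Eval L) : L := u.map u.P.root

/-- The relations `∼ₙ` on `L`-evaluations. -/
def sim (L : Type) [PartialOrder L] : ℕ → Eval L → Eval L → Prop
  | 0 => fun u v => u.rootVal = v.rootVal
  | n+1 => fun u v =>
      (∀ p, ∃ q, sim L n (u.restrict p) (v.restrict q)) ∧
      (∀ q, ∃ p, sim L n (v.restrict q) (u.restrict p))

/-- The relations `≤ₙ`: `lev L n v u` means `v ≤ₙ u`. -/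
def lev (L : Type) [PartialOrder L] : ℕ → Eval L → Eval L → Prop
  | 0 => fun v u => v.rootVal ≤ u.rootVal
  | n+1 => fun v u => ∀ q, ∃ p, sim L n (v.restrict q) (u.restrict p)

/-- `S` is a subpresheaf of `h_L`: closed under restriction. -/
def IsSub (L : Type) [PartialOrder L] (S : Set (Eval L)) : Prop :=
  ∀ u ∈ S, ∀ p, u.restrict p ∈ S

/-- `S` has b-index `n`: closed under `∼ₙ`. -/
def BIndex (L : Type) [PartialOrder L] (n : ℕ) (S : Set (Eval L)) : Prop :=
  ∀ u ∈ S, ∀ v, sim L n u v → v ∈ S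

/-- `S` has b≤-index `n`: closed under being `≤ₙ`-below a member. -/
def BleIndex (L : Type) [PartialOrder L] (n : ℕ) (S : Set (Eval L)) : Prop :=
  ∀ u ∈ S, ∀ v, lev L n v u → v ∈ S

/-- `↓ₙ u`. -/
def downSet (L : Type) [PartialOrder L] (n : ℕ) (u : Eval L) : Set (Eval L) :=
  {v | lev L n v u}

/-- Pointwise description of Heyting implication of subpresheaves. -/
def himpPt (L : Type) [PartialOrder L] (S T : Set (Eval L)) : Set (Eval L) :=
  {u | ∀ p, u.restrict p ∈ S → u.restrict p ∈ T}

/-- The embedding of downward closed subsets of `L` into subpresheaves. -/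
def iota (L : Type) [PartialOrder L] (d : Set L) : Set (Eval L) :=
  {u | u.rootVal ∈ d}

/-- Membership in the Heyting algebra `S(h_L)`: subpresheaves with a b-index. -/
def InS (L : Type) [PartialOrder L] (S : Set (Eval L)) : Prop :=
  IsSub L S ∧ ∃ n, BIndex L n S

/-- `ev_f`. -/
def evalMap (L : Type) [PartialOrder L] (f : Eval L) (X : Set (Eval L)) : Set f.P.carrier :=
  {p | f.restrict p ∈ X}

/-- Heyting implication of downward closed subsets of a poset. -/
def himpD {M : Type} [PartialOrder M] (a b : Set M) : Set M :=
  {p | ∀ q ≤ p, q ∈ a → q ∈ b}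

/-- Invariant type for `∼ₙ`. -/
def invType (L : Type) : ℕ → Type
  | 0 => L
  | n+1 => Set (invType L n)

instance invType.finite (L : Type) [Finite L] : ∀ n, Finite (invType L n)
  | 0 => ‹Finite L›
  | n+1 => by
    haveI := invType.finite L n
    exact inferInstanceAs (Finite (Set (invType L n)))

/-- The invariant of an evaluation. -/
def evinv (L : Type) [PartialOrder L] : (n : ℕ) → Eval L → invType L n
  | 0, u => u.rootVal
  | n+1, u => Set.range (fun p => evinv L n (u.restrict p))

theorem sim_iff_evinv (L : Type) [PartialOrder L] :
    ∀ n (u v : Eval L), sim L n u v ↔ evinv L n u = evinv L n v := by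
  intro n
  induction n with
  | zero => intro u v; rfl
  | succ n ih =>
    intro u v
    constructor
    · rintro ⟨h1, h2⟩
      apply Set.eq_of_subset_of_subset
      · rintro x ⟨p, rfl⟩
        obtain ⟨q, hq⟩ := h1 p
        exact ⟨q, ((ih _ _).mp hq).symm⟩
      · rintro x ⟨q, rfl⟩
        obtain ⟨p, hp⟩ := h2 q
        exact ⟨p, ((ih _ _).mp hp).symm⟩
    · intro h
      constructor
      · intro p
        have : evinv L n (u.restrict p) ∈ Set.range (fun q => evinv L n (v.restrict q)) := by
          rw [show Set.range (fun q => evinv L n (v.restrict q)) = evinv L (n+1) v from rfl,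
            ← h]
          exact ⟨p, rfl⟩
        obtain ⟨q, hq⟩ := this
        exact ⟨q, (ih _ _).mpr hq.symm⟩
      · intro q
        have : evinv L n (v.restrict q) ∈ Set.range (fun p => evinv L n (u.restrict p)) := by
          rw [show Set.range (fun p => evinv L n (u.restrict p)) = evinv L (n+1) u from rfl,
            h]
          exact ⟨q, rfl⟩
        obtain ⟨p, hp⟩ := this
        exact ⟨p, (ih _ _).mpr hp.symm⟩

/-- For a finite poset `L` and every `n`, there are only finitely many
equivalence classes of `L`-evaluations with respect to `∼ₙ`. -/
theorem finitely_many_sim_classes (L : Type) [PartialOrder L] [Finite L] (n : ℕ) :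
    Finite (Quot (sim L n)) := by
  have : Function.Injective
      (Quot.lift (evinv L n) (fun u v h => (sim_iff_evinv L n u v).mp h)) := by
    rintro ⟨u⟩ ⟨v⟩ h
    exact Quot.sound ((sim_iff_evinv L n u v).mpr h)
  exact Finite.of_injective _ this
end

section
/- The map sending the ∼ₙ-class [u]ₙ of an L-evaluation u to the subpresheaf ↓ₙu is well defined and injective; consequently, for each fixed n there are only finitely many subpresheaves of h_L of the form ↓ₙu. -/
variable {L : Type} [PartialOrder L]

lemma sim_refl : ∀ (n : ℕ) (u : Eval L), sim L n u u
  | 0, _ => rfl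
  | n+1, u => ⟨fun p => ⟨p, sim_refl n _⟩, fun p => ⟨p, sim_refl n _⟩⟩

lemma sim_symm : ∀ (n : ℕ) {u v : Eval L}, sim L n u v → sim L n v u
  | 0, _, _, h => h.symm
  | n+1, _, _, h => ⟨h.2, h.1⟩

lemma sim_trans : ∀ (n : ℕ) {u v w : Eval L}, sim L n u v → sim L n v w → sim L n u w
  | 0, _, _, _, h1, h2 => h1.trans h2
  | n+1, _, _, _, h1, h2 =>
    ⟨fun p => by
      obtain ⟨q, hq⟩ := h1.1 p
      obtain ⟨r, hr⟩ := h2.1 q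
      exact ⟨r, sim_trans n hq hr⟩,
     fun r => by
      obtain ⟨q, hq⟩ := h2.2 r
      obtain ⟨p, hp⟩ := h1.2 q
      exact ⟨p, sim_trans n hq hp⟩⟩

lemma sim_to_lev : ∀ (n : ℕ) {u v : Eval L}, sim L n u v → lev L n u v
  | 0, _, _, h => h.le
  | _+1, _, _, h => h.1

lemma lev_congr_right : ∀ (n : ℕ) {u v w : Eval L}, sim L n u v → lev L n w u → lev L n w v
  | 0, _, _, _, h, hw => hw.trans h.le
  | n+1, _, _, _, h, hw => fun q => by
      obtain ⟨p, hp⟩ := hw q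
      obtain ⟨p', hp'⟩ := h.1 p
      exact ⟨p', sim_trans n hp hp'⟩

lemma sim_iff_lev : ∀ (n : ℕ) (u v : Eval L), sim L n u v ↔ lev L n u v ∧ lev L n v u
  | 0, u, v => ⟨fun h => ⟨h.le, h.ge⟩, fun h => le_antisymm h.1 h.2⟩
  | _+1, u, v => Iff.rfl

/-- Iterated invariant type. -/
def InvT (L : Type) : ℕ → Type
  | 0 => L
  | n+1 => Set (InvT L n)

instance invTFinite (L : Type) [Finite L] : ∀ n, Finite (InvT L n)
  | 0 => inferInstanceAs (Finite L)
  | n+1 => have := invTFinite L n; inferInstanceAs (Finite (Set (InvT L n)))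

/-- The invariant of an evaluation. -/
def inv (L : Type) [PartialOrder L] : ∀ n, Eval L → InvT L n
  | 0, u => u.rootVal
  | n+1, u => {x | ∃ p, x = inv L n (u.restrict p)}

lemma inv_eq_of_sim : ∀ (n : ℕ) {u v : Eval L}, sim L n u v → inv L n u = inv L n v
  | 0, _, _, h => h
  | n+1, u, v, h => by
      refine Set.ext fun x => ?_
      constructor
      · rintro ⟨p, rfl⟩
        obtain ⟨q, hq⟩ := h.1 p
        exact ⟨q, inv_eq_of_sim n hq⟩
      · rintro ⟨q, rfl⟩
        obtain ⟨p, hp⟩ := h.2 q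
        exact ⟨p, inv_eq_of_sim n hp⟩

lemma sim_of_inv_eq : ∀ (n : ℕ) {u v : Eval L}, inv L n u = inv L n v → sim L n u v
  | 0, _, _, h => h
  | n+1, u, v, h => by
      have h' : {x | ∃ p, x = inv L n (u.restrict p)} = {x | ∃ q, x = inv L n (v.restrict q)} := h
      constructor
      · intro p
        have hx : inv L n (u.restrict p) ∈ {x | ∃ q, x = inv L n (v.restrict q)} := by
          rw [← h']; exact ⟨p, rfl⟩
        obtain ⟨q, hq⟩ := hx
        exact ⟨q, sim_of_inv_eq n hq⟩
      · intro q
        have hx : inv L n (v.restrict q) ∈ {x | ∃ p, x = inv L n (u.restrict p)} := by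
          rw [h']; exact ⟨q, rfl⟩
        obtain ⟨p, hp⟩ := hx
        exact ⟨p, sim_of_inv_eq n hp⟩

/-- `[u]ₙ ↦ ↓ₙu` is well defined and injective; hence for fixed `n`
there are only finitely many subpresheaves of the form `↓ₙu`. -/
theorem downSet_well_defined_injective_finite (L : Type) [PartialOrder L] [Finite L]
    (n : ℕ) :
    (∀ u v : Eval L, sim L n u v → downSet L n u = downSet L n v) ∧
    (∀ u v : Eval L, downSet L n u = downSet L n v → sim L n u v) ∧
    Set.Finite {S : Set (Eval L) | ∃ u : Eval L, S = downSet L n u} := by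
  have wd : ∀ u v : Eval L, sim L n u v → downSet L n u = downSet L n v := by
    intro u v h
    ext w
    exact ⟨lev_congr_right n h, lev_congr_right n (sim_symm n h)⟩
  have inj : ∀ u v : Eval L, downSet L n u = downSet L n v → sim L n u v := by
    intro u v h
    have h1 : lev L n u v := by
      have : u ∈ downSet L n u := sim_to_lev n (sim_refl n u)
      rwa [h] at this
    have h2 : lev L n v u := by
      have : v ∈ downSet L n v := sim_to_lev n (sim_refl n v)
      rwa [← h] at this
    exact (sim_iff_lev n u v).2 ⟨h1, h2⟩
  refine ⟨wd, inj, ?_⟩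
  rw [← Set.finite_coe_iff]
  apply Finite.of_injective (fun S => inv L n S.2.choose)
  rintro ⟨S, hS⟩ ⟨T, hT⟩ h
  have := wd _ _ (sim_of_inv_eq n h)
  apply Subtype.ext
  show S = T
  exact hS.choose_spec.trans (this.trans hT.choose_spec.symm)
end

section
/- The map ι_L from the distributive lattice D(L) of downward closed subsets of L to S(h_L), sending a downset d to the subpresheaf ι_L(d)_P := { u : P → L : u(ρ(P)) ∈ d }, is a well-defined injective bounded lattice homomorphism, and its image consists exactly of the subpresheaves of b≤-index 0. -/
variable {L : Type} [PartialOrder L]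

def onePtFRP : FRP where
  carrier := PUnit
  root := PUnit.unit
  le_root := fun _ => le_refl _

def constEval {L : Type} [PartialOrder L] (a : L) : Eval L where
  P := onePtFRP
  map := fun _ => a
  mono := fun _ _ _ => le_refl a

lemma constEval_rootVal {L : Type} [PartialOrder L] (a : L) :
    (constEval a).rootVal = a := rfl

lemma restrict_rootVal {L : Type} [PartialOrder L] (u : Eval L) (p : u.P.carrier) :
    (u.restrict p).rootVal = u.map p := rfl

/-- `ι_L` is a well-defined injective bounded lattice embedding of the
downsets of `L` into `S(h_L)`, whose image is exactly the subpresheaves of b≤-index 0. -/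
theorem iota_embedding (L : Type) [PartialOrder L] [Finite L] :
    (∀ d : Set L, IsLowerSet d → IsSub L (iota L d) ∧ ∃ n, BIndex L n (iota L d)) ∧
    (∀ d d' : Set L, IsLowerSet d → IsLowerSet d' → iota L d = iota L d' → d = d') ∧
    (∀ d d' : Set L, iota L (d ∩ d') = iota L d ∩ iota L d' ∧
      iota L (d ∪ d') = iota L d ∪ iota L d') ∧
    iota L (∅ : Set L) = (∅ : Set (Eval L)) ∧
    iota L (Set.univ : Set L) = (Set.univ : Set (Eval L)) ∧
    (∀ S : Set (Eval L), IsSub L S →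
      (BleIndex L 0 S ↔ ∃ d : Set L, IsLowerSet d ∧ S = iota L d)) := by
  refine ⟨?_, ?_, ?_, rfl, rfl, ?_⟩
  · intro d hd
    refine ⟨fun u hu p => hd (u.mono (u.P.le_root p)) hu, 0, fun u hu v hs => ?_⟩
    have : v.rootVal = u.rootVal := hs.symm
    simpa [iota, this] using hu
  · intro d d' _ _ h
    ext a
    constructor
    · intro ha
      have : constEval a ∈ iota L d' := h ▸ ha
      exact this
    · intro ha
      have : constEval a ∈ iota L d := h.symm ▸ ha
      exact this
  · intro d d'
    exact ⟨rfl, rfl⟩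
  · intro S hS
    constructor
    · intro hB
      refine ⟨{a | ∃ u ∈ S, u.rootVal = a}, ?_, ?_⟩
      · rintro a b hab ⟨u, hu, hua⟩
        exact ⟨constEval b, hB u hu _ (by simpa [lev, constEval_rootVal, hua] using hab), rfl⟩
      · ext u
        constructor
        · intro hu; exact ⟨u, hu, rfl⟩
        · rintro ⟨w, hw, hwu⟩
          exact hB w hw u (by simp [lev, hwu])
    · rintro ⟨d, hd, rfl⟩
      intro u hu v hv
      exact hd hv hu
end

section
/- The image of ι_L : D(L) → S(h_L) generates S(h_L) as a Heyting algebra: every element of S(h_L) lies in the smallest sub-Heyting-algebra of S(h_L) containing all ι_L(d) for d a downset of L. -/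
variable {L : Type} [PartialOrder L]

/-- The smallest sub-Heyting algebra of `Sub(h_L)` containing the image of `ι_L`. -/
inductive Gen (L : Type) [PartialOrder L] : Set (Eval L) → Prop
  | basic (d : Set L) (hd : IsLowerSet d) : Gen L (iota L d)
  | inter (S T : Set (Eval L)) : Gen L S → Gen L T → Gen L (S ∩ T)
  | union (S T : Set (Eval L)) : Gen L S → Gen L T → Gen L (S ∪ T)
  | himp (S T : Set (Eval L)) : Gen L S → Gen L T → Gen L (himpPt L S T)

/-!
Evaluations `u`, `v` satisfy `u ∼ₙ v` iff they have the same invariant `inv n`, an element of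
the finite poset obtained by iterating `Set` over `L` (`n` times), and `v ≤ₙ u` iff
`inv n v ≤ inv n u`. A subpresheaf `S` of b-index `n` is closed under `≤ₙ`-predecessors: joining
`v` and `u` under a new root gives an evaluation `∼ₙ u` that restricts to `v`. Hence `S` is the
preimage under `inv n` of a lower set, a finite union of sets `inv n ⁻¹' Iic i`. These are
generated by induction on `n`: for `n = 0` they are `ι_L (Iic i)`, and `inv (n+1) ⁻¹' Iic T` is
the intersection over `i ∉ T` of the implications `inv n ⁻¹' Iic i ⇨ inv n ⁻¹' Iio i`.
-/

namespace FRP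

noncomputable def downOrderIso {P Q : FRP} (e : P.carrier ↪o Q.carrier)
    (he : IsLowerSet (Set.range e)) (p : P.carrier) :
    (P.down p).carrier ≃o (Q.down (e p)).carrier :=
  OrderIso.ofSurjective
    (OrderEmbedding.ofMapLEIff (fun x => ⟨e x.1, e.monotone x.2⟩) fun _ _ => e.le_iff_le)
    (by
      rintro ⟨y, hy⟩
      obtain ⟨x, rfl⟩ := he hy (Set.mem_range_self p)
      exact ⟨⟨x, e.le_iff_le.mp hy⟩, rfl⟩)

theorem orderIso_root {P Q : FRP} (e : P.carrier ≃o Q.carrier) : e P.root = Q.root :=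
  le_antisymm (Q.le_root _) (e.symm_apply_le.mp (P.le_root _))

def wedge (P Q : FRP) : FRP where
  carrier := WithTop (P.carrier ⊕ Q.carrier)
  root := ⊤
  le_root _ := le_top

end FRP

namespace WithTop

variable {α β : Type*} [PartialOrder α] [PartialOrder β]

def inlEmbedding : α ↪o WithTop (α ⊕ β) :=
  OrderEmbedding.ofMapLEIff (fun a => ((Sum.inl a : α ⊕ β) : WithTop (α ⊕ β))) fun _ _ => by
    simp

def inrEmbedding : β ↪o WithTop (α ⊕ β) :=
  OrderEmbedding.ofMapLEIff (fun b => ((Sum.inr b : α ⊕ β) : WithTop (α ⊕ β))) fun _ _ => by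
    simp

theorem isLowerSet_range_inlEmbedding :
    IsLowerSet (Set.range (inlEmbedding : α ↪o WithTop (α ⊕ β))) := by
  rintro _ x hx ⟨a, rfl⟩
  induction x using recTopCoe with
  | top => exact absurd hx (not_top_le_coe _)
  | coe x =>
    rcases x with a' | b
    · exact ⟨a', rfl⟩
    · exact absurd (coe_le_coe.mp hx) Sum.not_inr_le_inl

theorem isLowerSet_range_inrEmbedding :
    IsLowerSet (Set.range (inrEmbedding : β ↪o WithTop (α ⊕ β))) := by
  rintro _ x hx ⟨b, rfl⟩
  induction x using recTopCoe with
  | top => exact absurd hx (not_top_le_coe _)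
  | coe x =>
    rcases x with a | b'
    · exact absurd (coe_le_coe.mp hx) Sum.not_inl_le_inr
    · exact ⟨b', rfl⟩

end WithTop

namespace Eval

@[reducible] def Invariant (L : Type) : ℕ → Type
  | 0 => L
  | n + 1 => Set (Invariant L n)

instance Invariant.instPartialOrder : ∀ n, PartialOrder (Invariant L n)
  | 0 => ‹PartialOrder L›
  | n + 1 => inferInstanceAs (PartialOrder (Set (Invariant L n)))

instance Invariant.instFinite (L : Type) [Finite L] : ∀ n, Finite (Invariant L n)
  | 0 => ‹Finite L›
  | n + 1 => have := Invariant.instFinite L n; inferInstanceAs (Finite (Set (Invariant L n)))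

def inv : (n : ℕ) → Eval L → Invariant L n
  | 0, u => u.rootVal
  | n + 1, u => Set.range fun p => inv n (u.restrict p)

theorem inv_succ_le_iff {n : ℕ} {u v : Eval L} :
    inv (n + 1) v ≤ inv (n + 1) u ↔ ∀ q, ∃ p, inv n (u.restrict p) = inv n (v.restrict q) :=
  Set.range_subset_iff

theorem sim_iff_inv_eq : ∀ n (u v : Eval L), sim L n u v ↔ inv n u = inv n v
  | 0, _, _ => Iff.rfl
  | n + 1, u, v => by
    rw [le_antisymm_iff, inv_succ_le_iff, inv_succ_le_iff]
    simp only [sim, sim_iff_inv_eq n, eq_comm]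

theorem lev_iff_inv_le : ∀ n (v u : Eval L), lev L n v u ↔ inv n v ≤ inv n u
  | 0, _, _ => Iff.rfl
  | n + 1, v, u => by
    rw [inv_succ_le_iff]
    simp only [lev, sim_iff_inv_eq n, eq_comm]

theorem rootVal_le_of_inv_le : ∀ n {v u : Eval L}, inv n v ≤ inv n u → v.rootVal ≤ u.rootVal
  | 0, _, _, h => h
  | n + 1, v, u, h => by
    obtain ⟨p, hp⟩ := inv_succ_le_iff.mp h v.P.root
    have hroot : (v.restrict v.P.root).rootVal = (u.restrict p).rootVal :=
      le_antisymm (rootVal_le_of_inv_le n hp.ge) (rootVal_le_of_inv_le n hp.le)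
    calc v.rootVal = u.map p := hroot
      _ ≤ u.rootVal := u.mono (u.P.le_root p)

theorem inv_le_of_inv_succ_le :
    ∀ n {v u : Eval L}, inv (n + 1) v ≤ inv (n + 1) u → inv n v ≤ inv n u
  | 0, _, _, h => rootVal_le_of_inv_le 1 h
  | n + 1, v, u, h => by
    refine inv_succ_le_iff.mpr fun q => ?_
    obtain ⟨p, hp⟩ := inv_succ_le_iff.mp h q
    exact ⟨p, le_antisymm (inv_le_of_inv_succ_le n hp.le) (inv_le_of_inv_succ_le n hp.ge)⟩

theorem inv_eq_of_orderIso : ∀ n {u v : Eval L} (e : u.P.carrier ≃o v.P.carrier),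
    (∀ x, v.map (e x) = u.map x) → inv n u = inv n v
  | 0, u, v, e, he => by
    show u.map u.P.root = v.map v.P.root
    rw [← he, FRP.orderIso_root]
  | n + 1, u, v, e, he => by
    have hres (p : u.P.carrier) : inv n (u.restrict p) = inv n (v.restrict (e p)) :=
      inv_eq_of_orderIso n
        (FRP.downOrderIso e.toOrderEmbedding (by simp [isLowerSet_univ]) p)
        fun x : (u.P.down p).carrier => he x.1
    refine le_antisymm (inv_succ_le_iff.mpr fun p => ⟨e p, (hres p).symm⟩)
      (inv_succ_le_iff.mpr fun q => ⟨e.symm q, ?_⟩)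
    rw [hres, e.apply_symm_apply]

theorem inv_restrict_eq_of_orderEmbedding {u w : Eval L} (e : u.P.carrier ↪o w.P.carrier)
    (he : IsLowerSet (Set.range e)) (hmap : ∀ x, w.map (e x) = u.map x) (n : ℕ)
    (p : u.P.carrier) : inv n (w.restrict (e p)) = inv n (u.restrict p) :=
  (inv_eq_of_orderIso n (u := u.restrict p) (v := w.restrict (e p)) (FRP.downOrderIso e he p)
    fun x => hmap x.1).symm

theorem inv_restrict_root (n : ℕ) (u : Eval L) : inv n (u.restrict u.P.root) = inv n u :=
  inv_eq_of_orderIso n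
    { toEquiv := Equiv.subtypeUnivEquiv u.P.le_root, map_rel_iff' := Iff.rfl } fun _ => rfl

def join (u v : Eval L) (h : v.rootVal ≤ u.rootVal) : Eval L where
  P := u.P.wedge v.P
  map := (WithTop.recTopCoe u.rootVal (Sum.elim u.map v.map) : WithTop _ → L)
  mono := by
    refine WithTop.monotone_iff.mpr ⟨?_, ?_⟩
    · rintro (p | q) (p' | q') hle
      · exact u.mono (Sum.inl_le_inl_iff.mp hle)
      · exact absurd hle Sum.not_inl_le_inr
      · exact absurd hle Sum.not_inr_le_inl
      · exact v.mono (Sum.inr_le_inr_iff.mp hle)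
    · rintro (p | q)
      · exact u.mono (u.P.le_root p)
      · exact (v.mono (v.P.le_root q)).trans h

section Join

variable {u v : Eval L} {h : v.rootVal ≤ u.rootVal}

theorem inv_join_restrict_inl (n : ℕ) (p : u.P.carrier) :
    inv n ((join u v h).restrict ((Sum.inl p : u.P.carrier ⊕ v.P.carrier) : WithTop _)) =
      inv n (u.restrict p) :=
  inv_restrict_eq_of_orderEmbedding (w := join u v h) WithTop.inlEmbedding
    WithTop.isLowerSet_range_inlEmbedding (fun _ => by rfl) n p

theorem inv_join_restrict_inr (n : ℕ) (q : v.P.carrier) :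
    inv n ((join u v h).restrict ((Sum.inr q : u.P.carrier ⊕ v.P.carrier) : WithTop _)) =
      inv n (v.restrict q) :=
  inv_restrict_eq_of_orderEmbedding (w := join u v h) WithTop.inrEmbedding
    WithTop.isLowerSet_range_inrEmbedding (fun _ => by rfl) n q

theorem inv_join : ∀ n, inv n v ≤ inv n u → inv n (join u v h) = inv n u
  | 0, _ => rfl
  | n + 1, hle => by
    have hjoin : inv n (join u v h) = inv n u := inv_join n (inv_le_of_inv_succ_le n hle)
    refine le_antisymm (inv_succ_le_iff.mpr fun x => ?_) (inv_succ_le_iff.mpr fun p =>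
      ⟨_, inv_join_restrict_inl n p⟩)
    induction x using WithTop.recTopCoe with
    | top =>
      exact ⟨u.P.root, (inv_restrict_root n u).trans (inv_restrict_root n _ |>.trans hjoin).symm⟩
    | coe x =>
      rcases x with p | q
      · exact ⟨p, (inv_join_restrict_inl n p).symm⟩
      · obtain ⟨p, hp⟩ := inv_succ_le_iff.mp hle q
        exact ⟨p, hp.trans (inv_join_restrict_inr n q).symm⟩

end Join

end Eval

theorem BIndex.bleIndex {n : ℕ} {S : Set (Eval L)} (hS : IsSub L S) (hb : BIndex L n S) :
    BleIndex L n S := by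
  intro u hu v hvu
  rw [Eval.lev_iff_inv_le] at hvu
  have hroot := Eval.rootVal_le_of_inv_le n hvu
  have hjoin : u.join v hroot ∈ S :=
    hb u hu _ ((Eval.sim_iff_inv_eq n _ _).mpr (Eval.inv_join n hvu).symm)
  refine hb _ (hS _ hjoin ((Sum.inr v.P.root : u.P.carrier ⊕ v.P.carrier) : WithTop _)) v
    ((Eval.sim_iff_inv_eq n _ _).mpr ?_)
  rw [Eval.inv_join_restrict_inr, Eval.inv_restrict_root]

namespace Gen

theorem empty : Gen L ∅ := by
  simpa [iota] using Gen.basic (L := L) ∅ isLowerSet_empty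

theorem univ : Gen L Set.univ := by
  simpa [iota] using Gen.basic (L := L) Set.univ isLowerSet_univ

theorem biUnion {ι : Type*} {t : Set ι} (ht : t.Finite) {f : ι → Set (Eval L)}
    (hf : ∀ i ∈ t, Gen L (f i)) : Gen L (⋃ i ∈ t, f i) := by
  induction t, ht using Set.Finite.induction_on with
  | empty => simpa using empty
  | insert _ _ ih =>
    rw [Set.biUnion_insert]
    exact union _ _ (hf _ (Set.mem_insert _ _)) (ih fun i hi => hf i (Set.mem_insert_of_mem _ hi))

theorem biInter {ι : Type*} {t : Set ι} (ht : t.Finite) {f : ι → Set (Eval L)}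
    (hf : ∀ i ∈ t, Gen L (f i)) : Gen L (⋂ i ∈ t, f i) := by
  induction t, ht using Set.Finite.induction_on with
  | empty => simpa using univ
  | insert _ _ ih =>
    rw [Set.biInter_insert]
    exact inter _ _ (hf _ (Set.mem_insert _ _)) (ih fun i hi => hf i (Set.mem_insert_of_mem _ hi))

end Gen

theorem Set.preimage_eq_biUnion_preimage_Iic {X α : Type*} [Preorder α] (f : X → α)
    {s : Set α} (hs : IsLowerSet s) : f ⁻¹' s = ⋃ a ∈ s, f ⁻¹' Set.Iic a := by
  ext x
  simp only [Set.mem_preimage, Set.mem_iUnion, Set.mem_Iic, exists_prop]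
  exact ⟨fun hx => ⟨f x, hx, le_rfl⟩, fun ⟨_, ha, hle⟩ => hs hle ha⟩

namespace Eval

/-- `inv n x ≠ i` is expressed without negation as `inv n x ≤ i → inv n x < i`. -/
theorem inv_succ_preimage_Iic (n : ℕ) (T : Invariant L (n + 1)) :
    inv (n + 1) ⁻¹' Set.Iic T =
      ⋂ i ∈ (T : Set (Invariant L n))ᶜ,
        himpPt L (inv n ⁻¹' Set.Iic i) (inv n ⁻¹' Set.Iio i) := by
  ext a
  simp only [Set.mem_preimage, Set.mem_Iic, Set.mem_iInter, himpPt, Set.mem_ofPred_eq,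
    Set.mem_Iio, Set.mem_compl_iff]
  constructor
  · intro h i hi p hle
    exact lt_of_le_of_ne hle fun heq => hi (heq ▸ h ⟨p, rfl⟩)
  · rintro h _ ⟨p, rfl⟩
    by_contra hT
    exact lt_irrefl _ (h _ hT p le_rfl)

theorem gen_inv_preimage [Finite L] :
    ∀ n {s : Set (Invariant L n)}, IsLowerSet s → Gen L (inv n ⁻¹' s)
  | 0, s, hs => Gen.basic s hs
  | n + 1, s, hs => by
    rw [Set.preimage_eq_biUnion_preimage_Iic _ hs]
    refine Gen.biUnion s.toFinite fun T _ => ?_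
    rw [inv_succ_preimage_Iic]
    exact Gen.biInter (Set.toFinite _) fun i _ =>
      Gen.himp _ _ (gen_inv_preimage n (isLowerSet_Iic i))
        (gen_inv_preimage n (isLowerSet_Iio i))

end Eval

/-- the image of `ι_L` generates `S(h_L)` as a Heyting algebra. -/
theorem iota_generates (L : Type) [PartialOrder L] [Finite L]
    (S : Set (Eval L)) (hS : IsSub L S) (hb : ∃ n, BIndex L n S) : Gen L S := by
  obtain ⟨n, hn⟩ := hb
  have hS_eq : S = Eval.inv n ⁻¹' lowerClosure (Eval.inv n '' S) := by
    ext v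
    refine ⟨fun hv => subset_lowerClosure (Set.mem_image_of_mem _ hv), fun hv => ?_⟩
    obtain ⟨_, ⟨u, hu, rfl⟩, hvu⟩ := mem_lowerClosure.mp hv
    exact hn.bleIndex hS u hu v ((Eval.lev_iff_inv_le n v u).mpr hvu)
  rw [hS_eq]
  exact Eval.gen_inv_preimage n (lowerClosure _).lower
end

section
/- For every monotone map f : M → L between finite posets (with M rooted), the evaluation map ev_f : S(h_L) → D(M), defined by ev_f(X) := { p ∈ M : f_p ∈ X_{↓p} }, is a Heyting algebra homomorphism and satisfies ev_f ∘ ι_L = D(f) (inverse image of downsets along f). -/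
variable {L : Type} [PartialOrder L]

/-- Isomorphism of evaluations. -/
def EvIso (u v : Eval L) : Prop :=
  ∃ e : u.P.carrier ≃o v.P.carrier, ∀ x, v.map (e x) = u.map x

lemma EvIso.symm {u v : Eval L} (h : EvIso u v) : EvIso v u := by
  obtain ⟨e, he⟩ := h
  exact ⟨e.symm, fun y => by rw [← he (e.symm y), e.apply_symm_apply]⟩

/-- Restriction of an order iso to a downset. -/
def restrictIso {A B : Type} [PartialOrder A] [PartialOrder B] (e : A ≃o B) (p : A) :
    {x : A // x ≤ p} ≃o {y : B // y ≤ e p} where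
  toFun x := ⟨e x.1, e.le_iff_le.mpr x.2⟩
  invFun y := ⟨e.symm y.1, by
    have := e.symm.le_iff_le.mpr y.2
    simpa using this⟩
  left_inv x := by simp
  right_inv y := by simp
  map_rel_iff' := e.le_iff_le

lemma EvIso.restrict {u v : Eval L} (h : EvIso u v) (p : u.P.carrier) :
    EvIso (u.restrict p) (v.restrict (Classical.choose h p)) := by
  obtain ⟨e, he⟩ := id h
  refine ⟨?_, ?_⟩
  · exact (restrictIso (Classical.choose h) p)
  · intro x
    exact Classical.choose_spec h x.1

lemma evIso_sim {u v : Eval L} (h : EvIso u v) : ∀ n, sim L n u v := by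
  intro n
  induction n generalizing u v with
  | zero =>
    obtain ⟨e, he⟩ := h
    have hroot : e u.P.root = v.P.root := by
      apply le_antisymm (v.P.le_root _)
      have : e.symm v.P.root ≤ u.P.root := u.P.le_root _
      have := e.le_iff_le.mpr this
      simpa using this
    show u.rootVal = v.rootVal
    unfold Eval.rootVal
    rw [← hroot, he]
  | succ n ih =>
    obtain ⟨e, he⟩ := h
    constructor
    · intro p
      refine ⟨e p, ih ⟨restrictIso e p, fun x => he x.1⟩⟩
    · intro q
      refine ⟨e.symm q, ih ⟨?_, ?_⟩⟩
      · have : {y : v.P.carrier // y ≤ q} ≃o {x : u.P.carrier // x ≤ e.symm q} := by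
          have := restrictIso e.symm q
          exact this
        exact this
      · intro x
        show u.map (e.symm x.1) = v.map x.1
        rw [← he (e.symm x.1), e.apply_symm_apply]

/-- `f.restrict q` is isomorphic to `(f.restrict p).restrict ⟨q, h⟩`. -/
lemma restrict_restrict_iso (f : Eval L) {p q : f.P.carrier} (h : q ≤ p) :
    EvIso (f.restrict q) ((f.restrict p).restrict ⟨q, h⟩) := by
  refine ⟨⟨⟨fun x => ⟨⟨x.1, x.2.trans h⟩, x.2⟩, fun y => ⟨y.1.1, y.2⟩,
    fun x => rfl, fun y => rfl⟩, Iff.rfl⟩, fun x => rfl⟩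

lemma mem_iff_of_evIso {S : Set (Eval L)} (hS : ∃ n, BIndex L n S) {u v : Eval L}
    (h : EvIso u v) : u ∈ S ↔ v ∈ S := by
  obtain ⟨n, hn⟩ := hS
  exact ⟨fun hu => hn u hu v (evIso_sim h n), fun hv => hn v hv u (evIso_sim h.symm n)⟩

/-- for a monotone `f : M → L` with `M` a finite rooted poset (i.e. an
`L`-evaluation), `ev_f : S(h_L) → D(M)` is a Heyting algebra homomorphism satisfying
`ev_f ∘ ι_L = D(f)`. -/
theorem evalMap_heyting_hom (L : Type) [PartialOrder L] [Finite L] (f : Eval L) :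
    (∀ X : Set (Eval L), InS L X → IsLowerSet (evalMap L f X)) ∧
    (∀ d : Set L, evalMap L f (iota L d) = f.map ⁻¹' d) ∧
    (∀ S T : Set (Eval L), InS L S → InS L T →
      evalMap L f (S ∩ T) = evalMap L f S ∩ evalMap L f T ∧
      evalMap L f (S ∪ T) = evalMap L f S ∪ evalMap L f T ∧
      evalMap L f (himpPt L S T) = himpD (evalMap L f S) (evalMap L f T)) ∧
    evalMap L f (∅ : Set (Eval L)) = ∅ ∧
    evalMap L f (Set.univ : Set (Eval L)) = Set.univ := by
  refine ⟨?_, ?_, ?_, rfl, rfl⟩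
  · intro X ⟨hsub, hbi⟩ p q hqp hp
    have h1 : (f.restrict p).restrict ⟨q, hqp⟩ ∈ X := hsub _ hp _
    exact (mem_iff_of_evIso hbi (restrict_restrict_iso f hqp)).mpr h1
  · intro d; rfl
  · intro S T ⟨hSsub, hSbi⟩ ⟨hTsub, hTbi⟩
    refine ⟨rfl, rfl, ?_⟩
    ext p
    constructor
    · intro hp q hqp hqS
      have h1 : (f.restrict p).restrict ⟨q, hqp⟩ ∈ S :=
        (mem_iff_of_evIso hSbi (restrict_restrict_iso f hqp)).mp hqS
      have h2 := hp _ h1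
      exact (mem_iff_of_evIso hTbi (restrict_restrict_iso f hqp)).mpr h2
    · intro hp q hqS
      have hq : q.1 ≤ p := q.2
      have hqq : (⟨q.1, hq⟩ : {x : f.P.carrier // x ≤ p}) = q := rfl
      have h1 : f.restrict q.1 ∈ S :=
        (mem_iff_of_evIso hSbi (restrict_restrict_iso f hq)).mpr (by rw [hqq]; exact hqS)
      have h2 := hp q.1 hq h1
      have h3 := (mem_iff_of_evIso hTbi (restrict_restrict_iso f hq)).mp h2
      exact hqq ▸ h3
end

section
/- If f : h_M → h_L is a natural transformation of evaluation presheaves having b-index m (i.e., u ∼_{n+m} v implies f(u) ∼ₙ f(v) for all n), and D is a subpresheaf of h_M with b-index n, then f⁻¹(D) is a subpresheaf of h_L with b-index n + m. Consequently f⁻¹ restricts to a Heyting algebra homomorphism S(h_M) → S(h_L). -/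
variable {L : Type} [PartialOrder L]

/-- if `f : h_M → h_L` is a natural transformation with b-index `m` and
`D` is a subpresheaf with b-index `n`, then `f⁻¹(D)` is a subpresheaf with b-index
`n + m`; consequently `f⁻¹` restricts to a Heyting algebra homomorphism between the
algebras of subpresheaves with a b-index. -/
theorem preimage_bIndex (L M : Type) [PartialOrder L] [Finite L]
    [PartialOrder M] [Finite M]
    (f : Eval M → Eval L)
    (hdom : ∀ u : Eval M, (f u).P = u.P)
    (hres : ∀ (u : Eval M) (p : u.P.carrier),
      f (u.restrict p) = (f u).restrict (cast (congrArg FRP.carrier (hdom u)).symm p))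
    (m : ℕ)
    (hb : ∀ (n : ℕ) (u v : Eval M), sim M (n+m) u v → sim L n (f u) (f v)) :
    (∀ D : Set (Eval L), IsSub L D → IsSub M (f ⁻¹' D)) ∧
    (∀ (n : ℕ) (D : Set (Eval L)), IsSub L D → BIndex L n D →
      BIndex M (n+m) (f ⁻¹' D)) ∧
    (∀ S T : Set (Eval L), f ⁻¹' (S ∩ T) = f ⁻¹' S ∩ f ⁻¹' T) ∧
    (∀ S T : Set (Eval L), f ⁻¹' (S ∪ T) = f ⁻¹' S ∪ f ⁻¹' T) ∧
    (∀ S T : Set (Eval L), InS L S → InS L T →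
      f ⁻¹' (himpPt L S T) = himpPt M (f ⁻¹' S) (f ⁻¹' T)) := by
  refine ⟨?_, ?_, fun S T => Set.preimage_inter, fun S T => Set.preimage_union, ?_⟩
  · intro D hD u hu p
    show f (u.restrict p) ∈ D
    rw [hres u p]
    exact hD _ hu _
  · intro n D _ hD u hu v huv
    exact hD _ hu _ (hb n u v huv)
  · intro S T _ _
    ext u
    constructor
    · intro h p hp
      have := h (cast (congrArg FRP.carrier (hdom u)).symm p)
      rw [← hres u p] at this
      exact this hp
    · intro h q hq
      have e : f (u.restrict (cast (congrArg FRP.carrier (hdom u)) q)) = (f u).restrict q := by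
        rw [hres u _]; simp only [cast_cast, cast_eq]
      have hp := h (cast (congrArg FRP.carrier (hdom u)) q)
      rw [← e]
      exact hp (by show f _ ∈ S; rw [e]; exact hq)
end
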